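/- arXiv:2106.13127 — 2 statements merged into one kernel-verified Lean document; each statement's English description precedes it below -/
import Mathlib

section
/- Let A ∈ ℝ^{n×n} be entrywise nonnegative, and suppose the weighted digraph with an edge from node j to node i whenever A_{ij} > 0 is strongly connected. Let L = D − A, where D is the diagonal matrix with D_{ii} = Σ_j A_{ij}. Then 0 is a simple eigenvalue of L (algebraic multiplicity one), the all-ones vector is a right eigenvector of L for the eigenvalue 0, and there exists a left eigenvector of L for the eigenvalue 0 all of whose entries are strictly positive. -/
/-!
A vector `x` with `L x = 0` equals at each node `i` the `A i ·`-weighted average of its values,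
so the set where `x` is maximal is closed under predecessors and, by strong connectivity, is
everything: `ker L = span 1`. For a left null vector `v`, the triangle inequality gives
`(|v| L)_j ≤ 0` for every `j`, while these entries sum to `|v| ⬝ L 1 = 0`; hence `|v| L = 0`.
The zero set of a nonnegative left null vector is closed under successors, so `|v| > 0`.
With this `u = |v|`, `L² x = 0` forces `L x = c • 1` and `c ∑ uᵢ = u ⬝ L x = 0`, so the
generalised `0`-eigenspace is `ker L`, of dimension one.
-/

open Matrix Polynomial

noncomputable def specEigs {n : Type*} [Fintype n] [DecidableEq n]
    (M : Matrix n n ℝ) : Multiset ℂ :=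
  (M.charpoly.map (algebraMap ℝ ℂ)).roots

theorem Relation.ReflTransGen.of_closed {α : Type*} {r : α → α → Prop} {p : α → Prop}
    (hp : ∀ a b, r a b → p a → p b) {a b : α} (hab : ReflTransGen r a b) (ha : p a) : p b := by
  induction hab with
  | refl => exact ha
  | tail _ hbc ih => exact hp _ _ hbc ih

theorem Module.End.maxGenEigenspace_zero_eq_ker {K V : Type*} [Field K] [AddCommGroup V]
    [Module K V] (f : Module.End K V) (h : ∀ x, f (f x) = 0 → f x = 0) :
    f.maxGenEigenspace 0 = LinearMap.ker f := by
  have hpow : ∀ k x, (f ^ k) x = 0 → f x = 0 := by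
    intro k
    induction k with
    | zero => intro x hx; simp_all
    | succ k ih => intro x hx; exact h x (ih (f x) hx)
  ext x
  simp only [Module.End.mem_maxGenEigenspace, zero_smul, sub_zero, LinearMap.mem_ker]
  exact ⟨fun ⟨k, hk⟩ => hpow k x hk, fun hx => ⟨1, by simpa using hx⟩⟩

namespace Matrix

variable {ι R : Type*} [Fintype ι] [DecidableEq ι]

def laplacian [AddCommGroup R] (A : Matrix ι ι R) : Matrix ι ι R :=
  diagonal (fun i => ∑ j, A i j) - A

def IsStronglyConnected [Zero R] [LT R] (A : Matrix ι ι R) : Prop :=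
  ∀ i j, Relation.ReflTransGen (fun a b => 0 < A b a) i j

section Ring

variable [Ring R] (A : Matrix ι ι R)

theorem laplacian_mulVec_apply (x : ι → R) (i : ι) :
    (laplacian A *ᵥ x) i = ∑ j, A i j * (x i - x j) := by
  rw [laplacian, sub_mulVec, Pi.sub_apply, mulVec_diagonal]
  simp [mulVec, dotProduct, mul_sub, Finset.sum_mul]

theorem vecMul_laplacian_apply (x : ι → R) (j : ι) :
    (x ᵥ* laplacian A) j = x j * ∑ k, A j k - ∑ i, x i * A i j := by
  rw [laplacian, vecMul_sub, Pi.sub_apply, vecMul_diagonal]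
  simp [vecMul, dotProduct]

theorem laplacian_mulVec_one : laplacian A *ᵥ 1 = 0 := by
  ext i
  simp [laplacian_mulVec_apply]

end Ring

section LinearOrderedField

variable [Field R] [LinearOrder R] [IsStrictOrderedRing R] {A : Matrix ι ι R}

theorem eq_of_laplacian_mulVec_eq_zero_of_isMax (hA : ∀ i j, 0 ≤ A i j) {x : ι → R}
    (hx : laplacian A *ᵥ x = 0) {i j : ι} (hmax : ∀ k, x k ≤ x i) (hij : 0 < A i j) :
    x j = x i := by
  have hsum : ∑ k, A i k * (x i - x k) = 0 := by
    rw [← laplacian_mulVec_apply, hx, Pi.zero_apply]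
  have hterm := (Finset.sum_eq_zero_iff_of_nonneg fun k _ =>
    mul_nonneg (hA i k) (sub_nonneg.mpr (hmax k))).mp hsum j (Finset.mem_univ j)
  linarith [(mul_eq_zero.mp hterm).resolve_left hij.ne']

theorem ker_mulVecLin_laplacian [Nonempty ι] (hA : ∀ i j, 0 ≤ A i j)
    (hsc : IsStronglyConnected A) :
    LinearMap.ker (laplacian A).mulVecLin = Submodule.span R {1} := by
  refine le_antisymm (fun x hx => ?_) ?_
  · have hx : laplacian A *ᵥ x = 0 := hx
    obtain ⟨i, hi⟩ := Finite.exists_max x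
    have hconst : ∀ j, x j = x i := fun j =>
      (Relation.reflTransGen_swap.mpr (hsc j i)).of_closed
        (fun b a hab (hb : x b = x i) =>
          (eq_of_laplacian_mulVec_eq_zero_of_isMax hA hx (hb ▸ hi) hab).trans hb)
        rfl
    exact Submodule.mem_span_singleton.mpr ⟨x i, funext fun j => by simp [hconst j]⟩
  · rw [Submodule.span_singleton_le_iff_mem]
    exact laplacian_mulVec_one A

theorem abs_vecMul_laplacian_eq_zero (hA : ∀ i j, 0 ≤ A i j) {x : ι → R}
    (hx : x ᵥ* laplacian A = 0) : |x| ᵥ* laplacian A = 0 := by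
  have hle : ∀ j, (|x| ᵥ* laplacian A) j ≤ 0 := fun j => by
    have hbal : x j * ∑ k, A j k = ∑ i, x i * A i j := by
      rw [← sub_eq_zero, ← vecMul_laplacian_apply, hx, Pi.zero_apply]
    rw [vecMul_laplacian_apply, sub_nonpos]
    calc |x| j * ∑ k, A j k = |∑ i, x i * A i j| := by
          rw [← hbal, abs_mul, abs_of_nonneg (Finset.sum_nonneg fun k _ => hA j k), Pi.abs_apply]
      _ ≤ ∑ i, |x i * A i j| := Finset.abs_sum_le_sum_abs _ _
      _ = ∑ i, |x| i * A i j := by simp_rw [abs_mul, abs_of_nonneg (hA _ _), Pi.abs_apply]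
  have hsum : ∑ j, (|x| ᵥ* laplacian A) j = 0 := by
    rw [← dotProduct_one, ← dotProduct_mulVec, laplacian_mulVec_one, dotProduct_zero]
  ext j
  exact (Finset.sum_eq_zero_iff_of_nonpos fun j _ => hle j).mp hsum j (Finset.mem_univ j)

theorem pos_of_vecMul_laplacian_eq_zero (hA : ∀ i j, 0 ≤ A i j) (hsc : IsStronglyConnected A)
    {w : ι → R} (hw : 0 ≤ w) (hw0 : w ≠ 0) (hwL : w ᵥ* laplacian A = 0) (i : ι) :
    0 < w i := by
  have hzero : ∀ a b, 0 < A b a → w a = 0 → w b = 0 := fun a b hab ha => by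
    have hsum : ∑ k, w k * A k a = 0 := by
      have := vecMul_laplacian_apply A w a
      rw [hwL, ha, zero_mul, zero_sub, Pi.zero_apply, zero_eq_neg] at this
      exact this
    have hterm := (Finset.sum_eq_zero_iff_of_nonneg fun k _ =>
      mul_nonneg (hw k) (hA k a)).mp hsum b (Finset.mem_univ b)
    exact (mul_eq_zero.mp hterm).resolve_right hab.ne'
  refine (hw i).lt_of_ne fun hi => hw0 (funext fun j => ?_)
  exact (hsc i j).of_closed hzero hi.symm

theorem exists_pos_vecMul_laplacian_eq_zero [Nonempty ι] (hA : ∀ i j, 0 ≤ A i j)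
    (hsc : IsStronglyConnected A) : ∃ u : ι → R, (∀ i, 0 < u i) ∧ u ᵥ* laplacian A = 0 := by
  have hdet : (laplacian A).det = 0 :=
    exists_mulVec_eq_zero_iff.mp ⟨_, one_ne_zero, laplacian_mulVec_one A⟩
  obtain ⟨v, hv0, hv⟩ := exists_vecMul_eq_zero_iff.mpr hdet
  have hvL := abs_vecMul_laplacian_eq_zero hA hv
  exact ⟨|v|, pos_of_vecMul_laplacian_eq_zero hA hsc (abs_nonneg v)
    (mt (Pi.abs_eq_zero v).mp hv0) hvL, hvL⟩

theorem maxGenEigenspace_laplacian_zero [Nonempty ι] (hA : ∀ i j, 0 ≤ A i j)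
    (hsc : IsStronglyConnected A) :
    Module.End.maxGenEigenspace (laplacian A).mulVecLin 0 = Submodule.span R {1} := by
  rw [Module.End.maxGenEigenspace_zero_eq_ker, ker_mulVecLin_laplacian hA hsc]
  intro x hx
  obtain ⟨u, hu, huL⟩ := exists_pos_vecMul_laplacian_eq_zero hA hsc
  obtain ⟨c, hc⟩ := Submodule.mem_span_singleton.mp <|
    (ker_mulVecLin_laplacian hA hsc).le (LinearMap.mem_ker.mpr hx)
  have hLx : laplacian A *ᵥ x = c • 1 := hc.symm
  have hc0 : c * ∑ i, u i = 0 :=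
    calc c * ∑ i, u i = u ⬝ᵥ (laplacian A *ᵥ x) := by
          simp [hLx, dotProduct, Finset.mul_sum, mul_comm]
      _ = 0 := by rw [dotProduct_mulVec, huL, zero_dotProduct]
  have hu_sum : 0 < ∑ i, u i := Finset.sum_pos (fun i _ => hu i) Finset.univ_nonempty
  simpa [(mul_eq_zero.mp hc0).resolve_right hu_sum.ne'] using hLx

end LinearOrderedField

end Matrix

theorem count_specEigs_eq_finrank_maxGenEigenspace {ι : Type*} [Fintype ι] [DecidableEq ι]
    (M : Matrix ι ι ℝ) (μ : ℝ) :
    (specEigs M).count (algebraMap ℝ ℂ μ) =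
      Module.finrank ℝ (Module.End.maxGenEigenspace M.mulVecLin μ) := by
  rw [specEigs, count_roots, ← eq_rootMultiplicity_map (algebraMap ℝ ℂ).injective,
    LinearMap.finrank_maxGenEigenspace_eq, charpoly_mulVecLin]

/-- If `A ∈ ℝ^{n×n}` is entrywise nonnegative and the weighted digraph with
an edge from `j` to `i` whenever `A_{ij} > 0` is strongly connected, then for the Laplacian
`L = D − A` (with `D_{ii} = Σ_j A_{ij}`): `0` is a simple eigenvalue of `L`, the all-ones
vector is a right eigenvector of `L` for `0`, and there is a strictly positive left
eigenvector of `L` for `0`. -/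
theorem laplacian_zero_simple_of_stronglyConnected
    {n : ℕ} (hn : 0 < n) (A : Matrix (Fin n) (Fin n) ℝ)
    (hA : ∀ i j, 0 ≤ A i j)
    -- strong connectivity: a directed path from every node to every node,
    -- where there is an edge from `j` to `i` whenever `A i j > 0`
    (hsc : ∀ i j : Fin n, Relation.ReflTransGen (fun a b => 0 < A b a) i j) :
    (specEigs (Matrix.diagonal (fun i => ∑ j, A i j) - A)).count 0 = 1 ∧
    (Matrix.diagonal (fun i => ∑ j, A i j) - A) *ᵥ (fun _ => (1 : ℝ)) = 0 ∧
    ∃ u : Fin n → ℝ, (∀ i, 0 < u i) ∧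
      u ᵥ* (Matrix.diagonal (fun i => ∑ j, A i j) - A) = 0 := by
  have : Nonempty (Fin n) := ⟨⟨0, hn⟩⟩
  change (specEigs A.laplacian).count 0 = 1 ∧ A.laplacian *ᵥ 1 = 0 ∧
    ∃ u : Fin n → ℝ, (∀ i, 0 < u i) ∧ u ᵥ* A.laplacian = 0
  refine ⟨?_, laplacian_mulVec_one A, exists_pos_vecMul_laplacian_eq_zero hA hsc⟩
  rw [← map_zero (algebraMap ℝ ℂ), count_specEigs_eq_finrank_maxGenEigenspace,
    maxGenEigenspace_laplacian_zero hA hsc, finrank_span_singleton one_ne_zero]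
end

section
/- Let 𝕃 ∈ ℝ^{n×n} have 0 as a simple eigenvalue whose right eigenvector is the all-ones vector 𝟙 and whose left eigenvector is u ∈ ℝ^n with Σ_p u_p ≠ 0, and suppose every nonzero eigenvalue of 𝕃 has strictly positive real part. Then for every initial condition x(0) ∈ ℝ^n, the solution x(τ) = exp(−τ𝕃) x(0) of the linear consensus dynamics dx/dτ = −𝕃 x converges as τ → ∞ to the consensus state x̄ 𝟙, where x̄ = ( Σ_p u_p x_p(0) ) / ( Σ_{p'} u_{p'} ) is the u-weighted average of the initial states. -/
/-!
Complexify and split `x(0)` into generalized eigenvectors of `𝕃`. On the generalized eigenspace of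
an eigenvalue `μ ≠ 0`, `exp(-τ𝕃)` acts as `e^{-τμ}` times a polynomial in `τ`, so that component
decays since `Re μ > 0`; it is also annihilated by the left eigenvector `u`. As `0` is simple, its
generalized eigenspace is the line through `𝟙`, which `exp(-τ𝕃)` fixes. So `x(τ) → c 𝟙`, and pairing
`x(0)` with `u` gives `c Σ u_p = Σ u_p x_p(0)`.
-/

open Matrix Polynomial Filter Topology

theorem Complex.tendsto_ofReal_pow_mul_exp_neg_mul_atTop_nhds_zero {μ : ℂ} (hμ : 0 < μ.re)
    (j : ℕ) : Tendsto (fun τ : ℝ => (τ : ℂ) ^ j * Complex.exp (-(τ * μ))) atTop (𝓝 0) := by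
  rw [tendsto_zero_iff_norm_tendsto_zero]
  refine ((isLittleO_pow_exp_pos_mul_atTop j hμ).tendsto_div_nhds_zero).congr' ?_
  filter_upwards [eventually_ge_atTop 0] with τ hτ
  simp [Complex.norm_exp, abs_of_nonneg hτ, div_eq_mul_inv, ← Real.exp_neg, mul_comm]

namespace Matrix

variable {ι 𝕂 : Type*} [Fintype ι] [DecidableEq ι]

section Exp

variable [RCLike 𝕂]

open scoped Nat Norms.Operator in
theorem exp_mulVec_eq_sum_range {M : Matrix ι ι 𝕂} {w : ι → 𝕂} {k : ℕ}
    (hw : M ^ k *ᵥ w = 0) :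
    NormedSpace.exp M *ᵥ w = ∑ j ∈ Finset.range k, (j ! : 𝕂)⁻¹ • (M ^ j *ᵥ w) := by
  have hexp : HasSum (fun j => (j ! : 𝕂)⁻¹ • (M ^ j *ᵥ w)) (NormedSpace.exp M *ᵥ w) := by
    have := (NormedSpace.exp_series_hasSum_exp' (𝕂 := 𝕂) M).mapL
      (LinearMap.toContinuousLinearMap ((mulVecBilin 𝕂 𝕂).flip w))
    simp only [LinearMap.coe_toContinuousLinearMap', LinearMap.flip_apply, mulVecBilin_apply,
      smul_mulVec] at this
    exact this
  refine hexp.unique (hasSum_sum_of_ne_finset_zero fun j hj => ?_)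
  obtain ⟨i, rfl⟩ := Nat.exists_eq_add_of_le' (not_lt.mp (Finset.mem_range.not.mp hj))
  rw [pow_add, ← mulVec_mulVec, hw, mulVec_zero, smul_zero]

theorem exp_mulVec_of_mulVec_eq_zero {M : Matrix ι ι 𝕂} {w : ι → 𝕂} (hw : M *ᵥ w = 0) :
    NormedSpace.exp M *ᵥ w = w := by
  have := exp_mulVec_eq_sum_range (k := 1) (by simpa using hw)
  simp only [Finset.range_one, Finset.sum_singleton, pow_zero, one_mulVec, Nat.factorial_zero,
    Nat.cast_one, inv_one, one_smul] at this
  exact this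

open scoped Norms.Operator in
theorem exp_algebraMap (c : 𝕂) :
    NormedSpace.exp (algebraMap 𝕂 (Matrix ι ι 𝕂) c) = algebraMap 𝕂 _ (NormedSpace.exp c) :=
  (NormedSpace.algebraMap_exp_comm c).symm

open scoped Norms.Operator in
theorem exp_map_algebraMap (A : Matrix ι ι ℝ) :
    (NormedSpace.exp A).map (algebraMap ℝ 𝕂) = NormedSpace.exp (A.map (algebraMap ℝ 𝕂)) :=
  NormedSpace.map_exp (algebraMap ℝ 𝕂).mapMatrix
    (continuous_id.matrix_map (continuous_algebraMap ℝ 𝕂)) A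

end Exp

open scoped Nat in
theorem tendsto_exp_neg_smul_mulVec_atTop_nhds_zero {M : Matrix ι ι ℂ} {μ : ℂ} (hμ : 0 < μ.re)
    {k : ℕ} {w : ι → ℂ} (hw : (M - μ • 1) ^ k *ᵥ w = 0) :
    Tendsto (fun τ : ℝ => NormedSpace.exp ((-τ : ℂ) • M) *ᵥ w) atTop (𝓝 0) := by
  set B := M - μ • 1
  have hexp (τ : ℝ) : NormedSpace.exp ((-τ : ℂ) • M) *ᵥ w =
      ∑ j ∈ Finset.range k, ((τ : ℂ) ^ j * Complex.exp (-(τ * μ))) •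
        (((-1) ^ j / j ! : ℂ) • (B ^ j *ᵥ w)) := by
    have hsplit : (-τ : ℂ) • M = algebraMap ℂ _ (-(τ * μ)) + (-τ : ℂ) • B := by
      simp [B, Algebra.algebraMap_eq_smul_one, smul_sub, smul_smul]
    have hBw : ((-τ : ℂ) • B) ^ k *ᵥ w = 0 := by rw [_root_.smul_pow, smul_mulVec, hw, smul_zero]
    rw [hsplit, exp_add_of_commute _ _ (Algebra.commute_algebraMap_left _ _), exp_algebraMap,
      ← mulVec_mulVec, exp_mulVec_eq_sum_range hBw, Algebra.algebraMap_eq_smul_one, smul_mulVec,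
      one_mulVec, ← Complex.exp_eq_exp_ℂ, Finset.smul_sum]
    refine Finset.sum_congr rfl fun j _ => ?_
    rw [_root_.smul_pow, smul_mulVec, smul_smul, smul_smul, smul_smul, neg_pow]
    ring_nf
  simp_rw [hexp]
  simpa using tendsto_finsetSum (Finset.range k) fun j _ =>
    (Complex.tendsto_ofReal_pow_mul_exp_neg_mul_atTop_nhds_zero hμ j).smul_const
      (((-1) ^ j / j ! : ℂ) • (B ^ j *ᵥ w))

section Field

variable [Field 𝕂]

theorem mem_maxGenEigenspace_toLin'_iff {A : Matrix ι ι 𝕂} {μ : 𝕂} {w : ι → 𝕂} :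
    w ∈ Module.End.maxGenEigenspace (toLin' A) μ ↔ ∃ k : ℕ, (A - μ • 1) ^ k *ᵥ w = 0 := by
  have h : toLin' A - μ • 1 = toLinAlgEquiv' (A - μ • 1) := by
    rw [map_sub, map_smul, map_one]; rfl
  simp only [Module.End.mem_maxGenEigenspace, h, ← map_pow]
  rfl

theorem mem_spectrum_of_mem_maxGenEigenspace_toLin' {A : Matrix ι ι 𝕂} {μ : 𝕂} {w : ι → 𝕂}
    (hw : w ∈ Module.End.maxGenEigenspace (toLin' A) μ) (hw0 : w ≠ 0) : μ ∈ spectrum 𝕂 A := by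
  have : Module.End.HasUnifEigenvalue (toLin' A) μ ⊤ :=
    fun h => hw0 ((Submodule.mem_bot 𝕂).mp (h ▸ hw))
  rw [← spectrum_toLin', ← Module.End.hasUnifEigenvalue_iff_mem_spectrum]
  exact this.lt zero_lt_one

theorem maxGenEigenspace_toLin'_eq_span_singleton {A : Matrix ι ι 𝕂} {μ : 𝕂}
    (hsimple : A.charpoly.rootMultiplicity μ = 1) {e : ι → 𝕂} (he : A *ᵥ e = μ • e)
    (he0 : e ≠ 0) : Module.End.maxGenEigenspace (toLin' A) μ = 𝕂 ∙ e := by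
  refine (Submodule.eq_of_le_of_finrank_le ?_ ?_).symm
  · rw [Submodule.span_singleton_le_iff_mem, mem_maxGenEigenspace_toLin'_iff]
    exact ⟨1, by simp [sub_mulVec, he, smul_mulVec]⟩
  · rw [finrank_span_singleton he0, LinearMap.finrank_maxGenEigenspace_eq, charpoly_toLin',
      hsimple]

theorem dotProduct_eq_zero_of_vecMul_eq_zero {A : Matrix ι ι 𝕂} {v w : ι → 𝕂}
    (hv : v ᵥ* A = 0) {μ : 𝕂} (hμ : μ ≠ 0) {k : ℕ} (hw : (A - μ • 1) ^ k *ᵥ w = 0) :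
    v ⬝ᵥ w = 0 := by
  have hpow (m : ℕ) : v ᵥ* (A - μ • 1) ^ m = (-μ) ^ m • v := by
    induction m with
    | zero => simp
    | succ m ih =>
      rw [pow_succ, ← vecMul_vecMul, ih, smul_vecMul, vecMul_sub, hv, vecMul_smul, vecMul_one,
        pow_succ, mul_smul, zero_sub, neg_smul, smul_neg, ← neg_smul]
  have : (-μ) ^ k * (v ⬝ᵥ w) = 0 := by
    rw [← smul_eq_mul, ← smul_dotProduct, ← hpow, ← dotProduct_mulVec, hw, dotProduct_zero]
  simpa [hμ] using this

end Field

theorem tendsto_exp_neg_smul_mulVec_of_rootMultiplicity_zero_eq_one {A : Matrix ι ι ℂ}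
    (hsimple : A.charpoly.rootMultiplicity 0 = 1) {e v : ι → ℂ} (he : A *ᵥ e = 0)
    (hv : v ᵥ* A = 0) (hve : v ⬝ᵥ e ≠ 0) (hspec : ∀ μ ∈ spectrum ℂ A, μ ≠ 0 → 0 < μ.re)
    (w : ι → ℂ) :
    Tendsto (fun τ : ℝ => NormedSpace.exp ((-τ : ℂ) • A) *ᵥ w) atTop
      (𝓝 ((v ⬝ᵥ w / v ⬝ᵥ e) • e)) := by
  have hker := maxGenEigenspace_toLin'_eq_span_singleton hsimple (by rw [he, zero_smul])
    (fun h => hve (by rw [h, dotProduct_zero]))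
  have hmem : w ∈ ⨆ μ, Module.End.maxGenEigenspace (toLin' A) μ := by
    rw [Module.End.iSup_maxGenEigenspace_eq_top]; trivial
  refine Submodule.iSup_induction _ (motive := fun w => Tendsto
    (fun τ : ℝ => NormedSpace.exp ((-τ : ℂ) • A) *ᵥ w) atTop (𝓝 ((v ⬝ᵥ w / v ⬝ᵥ e) • e)))
    hmem (fun μ w hw => ?_) (by simp) fun w₁ w₂ h₁ h₂ => ?_
  · obtain rfl | hμ := eq_or_ne μ 0
    · obtain ⟨c, rfl⟩ := Submodule.mem_span_singleton.mp (hker ▸ hw)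
      have hfix (τ : ℝ) : NormedSpace.exp ((-τ : ℂ) • A) *ᵥ c • e = c • e :=
        exp_mulVec_of_mulVec_eq_zero (by rw [smul_mulVec, mulVec_smul, he, smul_zero, smul_zero])
      rw [dotProduct_smul, smul_eq_mul, mul_div_assoc, div_self hve, mul_one]
      simp only [hfix, tendsto_const_nhds]
    · obtain rfl | hw0 := eq_or_ne w 0
      · simp
      obtain ⟨k, hk⟩ := mem_maxGenEigenspace_toLin'_iff.mp hw
      rw [dotProduct_eq_zero_of_vecMul_eq_zero hv hμ hk, zero_div, zero_smul]
      exact tendsto_exp_neg_smul_mulVec_atTop_nhds_zero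
        (hspec μ (mem_spectrum_of_mem_maxGenEigenspace_toLin' hw hw0) hμ) hk
  · simpa [mulVec_add, dotProduct_add, add_div, add_smul] using h₁.add h₂

end Matrix

theorem count_specEigs {ι : Type*} [Fintype ι] [DecidableEq ι] (M : Matrix ι ι ℝ) (μ : ℂ) :
    (specEigs M).count μ = (M.map (algebraMap ℝ ℂ)).charpoly.rootMultiplicity μ := by
  rw [specEigs, ← charpoly_map, count_roots]

theorem mem_specEigs_iff {ι : Type*} [Fintype ι] [DecidableEq ι] (M : Matrix ι ι ℝ) (μ : ℂ) :
    μ ∈ specEigs M ↔ μ ∈ spectrum ℂ (M.map (algebraMap ℝ ℂ)) := by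
  rw [specEigs, ← charpoly_map, mem_roots (charpoly_monic _).ne_zero,
    mem_spectrum_iff_isRoot_charpoly]

/-- If `0` is a simple eigenvalue of `𝕃` with right eigenvector the all-ones
vector and left eigenvector `u` with `Σ_p u_p ≠ 0`, and every nonzero eigenvalue of `𝕃` has
strictly positive real part, then for every initial condition `x(0)` the solution
`x(τ) = exp(−τ𝕃) x(0)` of `dx/dτ = −𝕃x` converges, as `τ → ∞`, to the consensus state
`x̄ 𝟙` with `x̄ = (Σ_p u_p x_p(0)) / (Σ_{p'} u_{p'})`. -/
theorem consensus_convergence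
    {n : ℕ} (𝕃 : Matrix (Fin n) (Fin n) ℝ)
    (hsimple : (specEigs 𝕃).count 0 = 1)
    (hright : 𝕃 *ᵥ (fun _ => (1 : ℝ)) = 0)
    (u : Fin n → ℝ)
    (hleft : u ᵥ* 𝕃 = 0)
    (husum : ∑ p, u p ≠ 0)
    (hspec : ∀ μ ∈ specEigs 𝕃, μ ≠ 0 → 0 < μ.re)
    (x0 : Fin n → ℝ) :
    Tendsto (fun τ : ℝ => (NormedSpace.exp ((-τ) • 𝕃)) *ᵥ x0) atTop
      (𝓝 (fun _ => (∑ p, u p * x0 p) / ∑ p, u p)) := by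
  set L := 𝕃.map (algebraMap ℝ ℂ)
  set toℂ : (Fin n → ℝ) → Fin n → ℂ := Pi.map fun _ => algebraMap ℝ ℂ
  have hmulVec (M : Matrix (Fin n) (Fin n) ℝ) (v : Fin n → ℝ) :
      toℂ (M *ᵥ v) = M.map (algebraMap ℝ ℂ) *ᵥ toℂ v :=
    funext (RingHom.map_mulVec _ M v)
  have hrightL : L *ᵥ toℂ 1 = 0 := by
    rw [← hmulVec, Pi.one_def, hright]; rfl
  have hleftL : toℂ u ᵥ* L = 0 := by
    rw [← show toℂ (u ᵥ* 𝕃) = toℂ u ᵥ* L from funext (RingHom.map_vecMul _ 𝕃 u), hleft]; rfl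
  have hsumL : toℂ u ⬝ᵥ toℂ 1 ≠ 0 := by
    simpa [toℂ, dotProduct] using Complex.ofReal_ne_zero.mpr husum
  have hlim := tendsto_exp_neg_smul_mulVec_of_rootMultiplicity_zero_eq_one
    ((count_specEigs 𝕃 0).symm.trans hsimple) hrightL hleftL hsumL
    (fun μ hμ => hspec μ ((mem_specEigs_iff 𝕃 μ).mpr hμ)) (toℂ x0)
  rw [(IsEmbedding.piMap fun _ => Complex.isometry_ofReal.isEmbedding).isInducing.tendsto_nhds_iff]
  convert hlim using 2 with τ
  · change toℂ _ = _
    rw [hmulVec, exp_map_algebraMap]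
    congr
    ext
    simp
  · ext p
    simp [toℂ, dotProduct]
end
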